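/- arXiv:1503.00667 — 3 statements merged into one kernel-verified Lean document; each statement's English description precedes it below -/
import Mathlib

section
/- Let 𝔐 be a family of metric spaces and let X ∈ 𝔐 be boundedly compact, homogeneous and 𝔐-universal. Then X is minimal 𝔐-universal; moreover, every minimal 𝔐-universal metric space Y is isometric to X, and every 𝔐-universal metric space Y belonging to 𝔐 is isometric to X. -/
/-!
An isometric self-map `f` of a compact metric space is onto: the orbit of any point `t` returns
arbitrarily close to an earlier point, and since `f` preserves distances this means `t` lies
in the closure of the compact set `range f`. In a proper space an isometric self-map with a
fixed point `x` therefore maps every closed ball around `x` onto itself, and homogeneity supplies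
such a fixed point after composing with a second isometric self-map. So a proper homogeneous
space admits no isometric embedding into itself other than bijections, and all three claims
follow by composing the embeddings provided by universality.
-/

universe u v w

open Function Set

/-- `f` is an isometric (distance-preserving) embedding of metric spaces. -/
def IsIsomEmb {X : Type u} {Y : Type v} [MetricSpace X] [MetricSpace Y] (f : X → Y) : Prop :=
  ∀ a b : X, dist (f a) (f b) = dist a b

/-- `X` embeds isometrically into `Y`. -/
def IsomEmbeds (X : Type u) (Y : Type v) [MetricSpace X] [MetricSpace Y] : Prop :=
  ∃ f : X → Y, IsIsomEmb f

/-- `X` and `Y` are isometric: there is a surjective isometric embedding of `X` onto `Y`. -/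
def IsIsometricTo (X : Type u) (Y : Type v) [MetricSpace X] [MetricSpace Y] : Prop :=
  ∃ f : X → Y, IsIsomEmb f ∧ Surjective f

/-- `X` is not shifted: every isometric self-embedding of `X` is surjective. -/
def NotShifted (X : Type u) [MetricSpace X] : Prop :=
  ∀ f : X → X, IsIsomEmb f → Surjective f

/-- `Y` is universal for the family `M` of metric spaces. -/
def UnivFor {ι : Type w} (M : ι → Type u) [∀ i, MetricSpace (M i)]
    (Y : Type v) [MetricSpace Y] : Prop :=
  ∀ i, IsomEmbeds (M i) Y

/-- `Y` is minimal universal for the family `M` of metric spaces: `Y` is `M`-universal and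
every subset of `Y` (with the induced metric) which is `M`-universal equals `Y`. -/
def MinUnivFor {ι : Type w} (M : ι → Type u) [∀ i, MetricSpace (M i)]
    (Y : Type v) [MetricSpace Y] : Prop :=
  UnivFor M Y ∧ ∀ S : Set Y, UnivFor M ↥S → S = Set.univ

section Isometry

variable {X : Type*} [MetricSpace X]

lemma Isometry.iterate {f : X → X} (hf : Isometry f) (n : ℕ) : Isometry f^[n] := by
  induction n with
  | zero => exact isometry_id
  | succ n ih => rw [iterate_succ']; exact hf.comp ih

lemma exists_lt_dist_lt_of_compactSpace [CompactSpace X] (x : ℕ → X) {ε : ℝ} (hε : 0 < ε) :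
    ∃ m n, m < n ∧ dist (x m) (x n) < ε := by
  obtain ⟨_, -, φ, hφ, hlim⟩ := isCompact_univ.tendsto_subseq fun n => mem_univ (x n)
  obtain ⟨N, hN⟩ := Metric.cauchySeq_iff'.mp hlim.cauchySeq ε hε
  exact ⟨φ N, φ (N + 1), hφ N.lt_succ_self, by
    rw [dist_comm]; exact hN (N + 1) N.le_succ⟩

lemma Isometry.surjective_of_compactSpace [CompactSpace X] {f : X → X} (hf : Isometry f) :
    Surjective f := by
  intro t
  have hclosed : IsClosed (range f) := (isCompact_range hf.continuous).isClosed
  suffices t ∈ closure (range f) by rwa [hclosed.closure_eq] at this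
  refine Metric.mem_closure_iff.mpr fun ε hε => ?_
  obtain ⟨m, n, hmn, hdist⟩ := exists_lt_dist_lt_of_compactSpace (fun k => f^[k] t) hε
  obtain ⟨k, rfl⟩ := Nat.exists_eq_add_of_lt hmn
  refine ⟨f^[k + 1] t, ⟨f^[k] t, (iterate_succ_apply' f k t).symm⟩, ?_⟩
  rwa [add_assoc, iterate_add_apply, (hf.iterate m).dist_eq] at hdist

lemma Isometry.surjective_of_apply_eq_self [ProperSpace X] {f : X → X} (hf : Isometry f)
    {x : X} (hx : f x = x) : Surjective f := by
  intro t
  set B := Metric.closedBall x (dist t x)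
  have hB : MapsTo f B B := fun y hy => by
    have hfy : dist (f y) x = dist y x := by rw [← hf.dist_eq y x, hx]
    rwa [Metric.mem_closedBall, hfy]
  have : CompactSpace B := isCompact_iff_compactSpace.mp (isCompact_closedBall x _)
  have hfB : Isometry (hB.restrict f B B) := Isometry.of_dist_eq fun a b => hf.dist_eq a b
  obtain ⟨s, hs⟩ := hfB.surjective_of_compactSpace ⟨t, Metric.mem_closedBall.mpr le_rfl⟩
  exact ⟨s, congrArg Subtype.val hs⟩

end Isometry

section IsIsomEmb

variable {X : Type u} {Y : Type v} {Z : Type w} [MetricSpace X] [MetricSpace Y] [MetricSpace Z]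

lemma IsIsomEmb.isometry {f : X → Y} (hf : IsIsomEmb f) : Isometry f :=
  Isometry.of_dist_eq hf

lemma IsIsomEmb.comp {g : Y → Z} {f : X → Y} (hg : IsIsomEmb g) (hf : IsIsomEmb f) :
    IsIsomEmb (g ∘ f) :=
  (hg.isometry.comp hf.isometry).dist_eq

lemma IsomEmbeds.trans (hXY : IsomEmbeds X Y) (hYZ : IsomEmbeds Y Z) : IsomEmbeds X Z :=
  let ⟨f, hf⟩ := hXY
  let ⟨g, hg⟩ := hYZ
  ⟨g ∘ f, hg.comp hf⟩

lemma IsIsometricTo.symm (h : IsIsometricTo X Y) : IsIsometricTo Y X := by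
  obtain ⟨f, hf, hsurj⟩ := h
  have hinv : LeftInverse (surjInv hsurj) f :=
    leftInverse_surjInv ⟨hf.isometry.injective, hsurj⟩
  refine ⟨surjInv hsurj, fun a b => ?_, hinv.surjective⟩
  rw [← hf, surjInv_eq hsurj, surjInv_eq hsurj]

lemma notShifted_of_homogeneous [ProperSpace X]
    (hhom : ∀ x y : X, ∃ f : X → X, IsIsomEmb f ∧ f x = y) : NotShifted X := by
  intro f hf t
  obtain ⟨g, hg, hgt⟩ := hhom (f t) t
  have hgf : Surjective (g ∘ f) := (hg.comp hf).isometry.surjective_of_apply_eq_self hgt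
  exact hgf.of_comp_left hg.isometry.injective t

lemma NotShifted.isIsometricTo (hX : NotShifted X) (hXY : IsomEmbeds X Y)
    (hYX : IsomEmbeds Y X) : IsIsometricTo Y X := by
  obtain ⟨f, hf⟩ := hXY
  obtain ⟨g, hg⟩ := hYX
  exact ⟨g, hg, (hX _ (hg.comp hf)).of_comp⟩

end IsIsomEmb

section Universal

variable {ι : Type w} {M : ι → Type u} [∀ i, MetricSpace (M i)]

lemma UnivFor.of_isomEmbeds {X : Type v} {Y : Type*} [MetricSpace X] [MetricSpace Y]
    (hX : UnivFor M X) (hXY : IsomEmbeds X Y) : UnivFor M Y :=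
  fun i => (hX i).trans hXY

lemma minUnivFor_of_notShifted {i₀ : ι} (huniv : UnivFor M (M i₀)) (hX : NotShifted (M i₀)) :
    MinUnivFor M (M i₀) := by
  refine ⟨huniv, fun S hS => ?_⟩
  obtain ⟨f, hf⟩ := hS i₀
  have hsurj : Surjective (Subtype.val ∘ f) :=
    hX _ (isometry_subtype_coe.comp hf.isometry).dist_eq
  exact eq_univ_of_forall fun x => by
    obtain ⟨a, rfl⟩ := hsurj x
    exact (f a).2

lemma MinUnivFor.isIsometricTo {X : Type u} {Y : Type v} [MetricSpace X] [MetricSpace Y]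
    (hY : MinUnivFor M Y) (hX : UnivFor M X) (hXY : IsomEmbeds X Y) : IsIsometricTo X Y := by
  obtain ⟨f, hf⟩ := hXY
  have hrange : UnivFor M (range f) :=
    hX.of_isomEmbeds ⟨rangeFactorization f, fun a b => hf a b⟩
  exact ⟨f, hf, range_eq_univ.mp (hY.2 _ hrange)⟩

end Universal

/-- If `X = M i₀` belongs to the family `M`, is boundedly compact, homogeneous and
`M`-universal, then `X` is minimal `M`-universal; moreover every minimal `M`-universal
metric space is isometric to `X`, and every `M`-universal member of `M` is isometric
to `X`. -/
theorem statement7 {ι : Type w} (M : ι → Type u) [∀ i, MetricSpace (M i)] (i₀ : ι)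
    (hbc : ∀ s : Set (M i₀), IsClosed s → Bornology.IsBounded s → IsCompact s)
    (hhom : ∀ x y : M i₀, ∃ f : M i₀ → M i₀, IsIsomEmb f ∧ f x = y)
    (huniv : UnivFor M (M i₀)) :
    MinUnivFor M (M i₀) ∧
    (∀ (Y : Type v) [MetricSpace Y], MinUnivFor M Y → IsIsometricTo Y (M i₀)) ∧
    (∀ j, UnivFor M (M j) → IsIsometricTo (M j) (M i₀)) := by
  have : ProperSpace (M i₀) :=
    ⟨fun x r => hbc _ Metric.isClosed_closedBall Metric.isBounded_closedBall⟩
  have hX : NotShifted (M i₀) := notShifted_of_homogeneous hhom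
  exact ⟨minUnivFor_of_notShifted huniv hX,
    fun Y _ hY => (hY.isIsometricTo huniv (hY.1 i₀)).symm,
    fun j hj => hX.isIsometricTo (hj i₀) (huniv j)⟩
end

section
/- Let n be a positive integer and let E and F be n-dimensional normed vector spaces over ℝ. Then every distance-preserving map f : E → F (i.e. ‖f(x) − f(y)‖ = ‖x − y‖ for all x, y ∈ E) is surjective. -/
universe u v

open Function Set Metric Filter

/-!
By Rademacher's theorem `f` is differentiable somewhere, and its derivative there is a linear
isometric embedding `E → F`, hence a linear isometric equivalence since the dimensions agree.
Composing `f` with its inverse gives an isometric self-map of `E`, which is surjective: after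
a translation it fixes `0`, so it maps each closed ball about `0` into itself, and an isometric
self-map of a compact metric space is surjective because the orbit of any point returns
arbitrarily close to that point.
-/

theorem Isometry.iterate_s12 {X : Type*} [PseudoEMetricSpace X] {h : X → X} (hh : Isometry h) :
    ∀ k : ℕ, Isometry h^[k]
  | 0 => isometry_id
  | k + 1 => (hh.iterate_s12 k).comp hh

theorem Isometry.surjective_of_compactSpace_s12 {X : Type*} [MetricSpace X] [CompactSpace X]
    {h : X → X} (hh : Isometry h) : Surjective h := by
  intro y
  have hclosed : IsClosed (range h) := (isCompact_range hh.continuous).isClosed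
  suffices y ∈ closure (range h) by rwa [hclosed.closure_eq] at this
  rw [Metric.mem_closure_iff]
  intro ε hε
  obtain ⟨z, φ, hφ, hlim⟩ := CompactSpace.tendsto_subseq fun k => h^[k] y
  obtain ⟨N, hN⟩ := Metric.cauchySeq_iff'.1 hlim.cauchySeq ε hε
  obtain ⟨k, hk⟩ := Nat.exists_eq_add_of_lt (hφ (Nat.lt_succ_self N))
  refine ⟨h^[k + 1] y, ⟨h^[k] y, (iterate_succ_apply' h k y).symm⟩, ?_⟩
  calc dist y (h^[k + 1] y) = dist (h^[φ N] y) (h^[φ (N + 1)] y) := by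
        rw [hk, add_assoc, iterate_add_apply h (φ N) (k + 1), (hh.iterate_s12 _).dist_eq]
    _ = dist (h^[φ (N + 1)] y) (h^[φ N] y) := dist_comm _ _
    _ < ε := hN (N + 1) (Nat.le_succ N)

theorem Isometry.surjective_of_isFixedPt {X : Type*} [MetricSpace X] [ProperSpace X]
    {h : X → X} (hh : Isometry h) {x₀ : X} (hx₀ : IsFixedPt h x₀) : Surjective h := by
  intro y
  set B := closedBall x₀ (dist y x₀)
  have hmaps : MapsTo h B B := by simpa [hx₀.eq] using hh.mapsTo_closedBall x₀ (dist y x₀)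
  have : CompactSpace B := isCompact_iff_compactSpace.1 (isCompact_closedBall _ _)
  have hres : Isometry hmaps.restrict := fun a b => hh a b
  obtain ⟨⟨x, _⟩, hx⟩ := hres.surjective_of_compactSpace_s12 ⟨y, mem_closedBall.2 le_rfl⟩
  exact ⟨x, congrArg Subtype.val hx⟩

theorem Isometry.surjective_of_properSpace {E : Type*} [NormedAddCommGroup E] [ProperSpace E]
    {g : E → E} (hg : Isometry g) : Surjective g := by
  have hfix : IsFixedPt (fun x => g x - g 0) 0 := sub_self (g 0)
  exact (Surjective.of_comp_iff' (IsometryEquiv.subRight (g 0)).bijective g).1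
    (((IsometryEquiv.subRight (g 0)).isometry.comp hg).surjective_of_isFixedPt hfix)

section Derivative

variable {E F : Type*} [NormedAddCommGroup E] [NormedSpace ℝ E]
  [NormedAddCommGroup F] [NormedSpace ℝ F] {f : E → F}

theorem HasFDerivAt.norm_apply_of_isometry (hf : Isometry f) {T : E →L[ℝ] F} {x : E}
    (hT : HasFDerivAt f T x) (v : E) : ‖T v‖ = ‖v‖ := by
  have hc : Tendsto (fun n : ℕ => ‖(n : ℝ)‖) atTop atTop := by
    simpa using tendsto_natCast_atTop_atTop
  -- `T v` is the limit of `n • (f (x + n⁻¹ • v) - f x)`, and these all have norm `‖v‖`.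
  refine tendsto_nhds_unique ((continuous_norm.tendsto _).comp (hT.lim v hc))
    (tendsto_const_nhds.congr' ?_)
  filter_upwards [eventually_gt_atTop 0] with n hn
  have hn' : (n : ℝ) ≠ 0 := by positivity
  rw [comp_apply, norm_smul, ← dist_eq_norm, hf.dist_eq, dist_eq_norm, add_sub_cancel_left,
    norm_smul, norm_inv, ← mul_assoc, mul_inv_cancel₀ (norm_ne_zero_iff.2 hn'), one_mul]

theorem Isometry.exists_linearIsometry [FiniteDimensional ℝ E] [FiniteDimensional ℝ F]
    (hf : Isometry f) : Nonempty (E →ₗᵢ[ℝ] F) := by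
  borelize E
  obtain ⟨x, hx⟩ : {x | DifferentiableAt ℝ f x}.Nonempty :=
    (MeasureTheory.Measure.dense_of_ae
      (hf.lipschitz.ae_differentiableAt (μ := (Module.finBasis ℝ E).addHaar))).nonempty
  exact ⟨⟨fderiv ℝ f x, hx.hasFDerivAt.norm_apply_of_isometry hf⟩⟩

end Derivative

theorem statement12_general (n : ℕ)
    {E : Type u} {F : Type v} [NormedAddCommGroup E] [NormedSpace ℝ E]
    [NormedAddCommGroup F] [NormedSpace ℝ F]
    [FiniteDimensional ℝ E] [FiniteDimensional ℝ F]
    (hE : Module.finrank ℝ E = n) (hF : Module.finrank ℝ F = n)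
    (f : E → F) (hf : ∀ x y : E, ‖f x - f y‖ = ‖x - y‖) :
    Surjective f := by
  have hiso : Isometry f := Isometry.of_dist_eq fun x y => by simp only [dist_eq_norm, hf]
  obtain ⟨T⟩ := hiso.exists_linearIsometry
  have hT : Surjective T :=
    (T.toLinearMap.injective_iff_surjective_of_finrank_eq_finrank (hE.trans hF.symm)).1
      T.injective
  let e := LinearIsometryEquiv.ofSurjective T hT
  exact (Surjective.of_comp_iff' e.symm.bijective f).1
    (e.symm.isometry.comp hiso).surjective_of_properSpace

/-- Every distance-preserving map between two real normed vector spaces of the same finite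
positive dimension `n` is surjective. -/
theorem statement12 (n : ℕ) (hn : 0 < n)
    {E : Type u} {F : Type v} [NormedAddCommGroup E] [NormedSpace ℝ E]
    [NormedAddCommGroup F] [NormedSpace ℝ F]
    [FiniteDimensional ℝ E] [FiniteDimensional ℝ F]
    (hE : Module.finrank ℝ E = n) (hF : Module.finrank ℝ F = n)
    (f : E → F) (hf : ∀ x y : E, ‖f x - f y‖ = ‖x - y‖) :
    Surjective f :=
  statement12_general n hE hF f hf
end

section
/- Let 𝔐 = {Y_i : i ∈ I} be a nonempty family of nonempty metric spaces and let X be a metric space that is a disjoint union of the Y_i, i.e. there is a partition {X_i : i ∈ I} of X into nonempty sets such that X_i with the induced metric is isometric to Y_i for every i ∈ I. Then X is a minimal 𝔐-universal metric space if and only if the following three conditions hold: (i) every Y_i is not shifted; (ii) for all distinct i, j ∈ I the spaces Y_i and Y_j are incomparable, i.e. neither embeds isometrically into the other; (iii) for every i ∈ I there is a unique subset X^i ⊆ X such that X^i with the induced metric is isometric to Y_i. -/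
/-!
A minimal universal `X` has no proper universal subset. The pieces `P k`, `k ≠ i`, together with
any copy of `M i` form a universal subset, so every copy of `M i` contains `P i`. This fails for
the image of `P i` under a non-surjective self-embedding of `M i`, and for a copy of `M i` inside
another piece `P j`. Once `M i` is non-shifted, a copy containing `P i` must equal it.
Conversely, under (iii) every copy of `M i` inside a universal subset is the piece `P i` itself,
so the subset covers `X`.
-/

universe u v w

open Function Set

section Isometries

variable {A X Y : Type*} [MetricSpace A] [MetricSpace X] [MetricSpace Y]

theorem isIsomEmb_iff_isometry {f : X → Y} : IsIsomEmb f ↔ Isometry f :=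
  isometry_iff_dist_eq.symm

theorem isIsometricTo_iff_nonempty_isometryEquiv : IsIsometricTo X Y ↔ Nonempty (X ≃ᵢ Y) := by
  constructor
  · rintro ⟨f, hf, hsurj⟩
    have hf' := isIsomEmb_iff_isometry.1 hf
    exact ⟨{ Equiv.ofBijective f ⟨hf'.injective, hsurj⟩ with isometry_toFun := hf' }⟩
  · rintro ⟨e⟩
    exact ⟨e, isIsomEmb_iff_isometry.2 e.isometry, e.surjective⟩

theorem isomEmbeds_subtype_iff {S : Set X} :
    IsomEmbeds A S ↔ ∃ f : A → X, Isometry f ∧ range f ⊆ S := by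
  constructor
  · rintro ⟨f, hf⟩
    exact ⟨fun a => f a, isometry_subtype_coe.comp (isIsomEmb_iff_isometry.1 hf),
      range_subset_iff.2 fun a => (f a).2⟩
  · rintro ⟨f, hf, hfS⟩
    exact ⟨fun a => ⟨f a, hfS (mem_range_self a)⟩, hf.dist_eq⟩

theorem IsIsometricTo.exists_isometry_range_eq {S : Set X} (h : IsIsometricTo S A) :
    ∃ f : A → X, Isometry f ∧ range f = S := by
  obtain ⟨e⟩ := isIsometricTo_iff_nonempty_isometryEquiv.1 h
  exact ⟨(↑) ∘ e.symm, isometry_subtype_coe.comp e.symm.isometry, by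
    rw [range_comp, e.symm.range_eq_univ, image_univ, Subtype.range_coe]⟩

theorem IsIsometricTo.isomEmbeds_of_subset {S T : Set X} (h : IsIsometricTo S A) (hST : S ⊆ T) :
    IsomEmbeds A T := by
  obtain ⟨f, hf, hrange⟩ := h.exists_isometry_range_eq
  exact isomEmbeds_subtype_iff.2 ⟨f, hf, hrange ▸ hST⟩

theorem isIsometricTo_range {f : A → X} (hf : Isometry f) : IsIsometricTo (range f) A :=
  isIsometricTo_iff_nonempty_isometryEquiv.2 ⟨hf.isometryEquivOnRange.symm⟩

theorem eq_of_subset_of_isIsometricTo {S T : Set X} (hST : S ⊆ T) (hS : IsIsometricTo S Y)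
    (hT : IsIsometricTo T Y) (hY : NotShifted Y) : S = T := by
  obtain ⟨eS⟩ := isIsometricTo_iff_nonempty_isometryEquiv.1 hS
  obtain ⟨eT⟩ := isIsometricTo_iff_nonempty_isometryEquiv.1 hT
  have hincl : Isometry (inclusion hST) := fun _ _ => rfl
  have hg : Isometry (eT ∘ inclusion hST ∘ eS.symm) :=
    eT.isometry.comp (hincl.comp eS.symm.isometry)
  refine hST.antisymm fun x hx => ?_
  obtain ⟨y, hy⟩ := hY _ (isIsomEmb_iff_isometry.2 hg) (eT ⟨x, hx⟩)
  have hxy : inclusion hST (eS.symm y) = ⟨x, hx⟩ := eT.injective hy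
  have hval : ((eS.symm y : S) : X) = x := congrArg Subtype.val hxy
  exact hval ▸ (eS.symm y).2

end Isometries

section DisjointUnion

variable {ι : Type*} {M : ι → Type*} [∀ i, MetricSpace (M i)] {X : Type*} [MetricSpace X]
  {P : ι → Set X}

theorem univFor_of_isomEmbeds_of_subset (hiso : ∀ i, IsIsometricTo (P i) (M i)) {S : Set X}
    {i : ι} (hi : IsomEmbeds (M i) S) (hP : ∀ k, k ≠ i → P k ⊆ S) : UnivFor M S := by
  intro k
  by_cases hki : k = i
  · exact hki ▸ hi
  · exact (hiso k).isomEmbeds_of_subset (hP k hki)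

theorem MinUnivFor.eq_univ_of_isomEmbeds_of_subset (hmin : MinUnivFor M X)
    (hiso : ∀ i, IsIsometricTo (P i) (M i)) {S : Set X} {i : ι} (hi : IsomEmbeds (M i) S)
    (hP : ∀ k, k ≠ i → P k ⊆ S) : S = univ :=
  hmin.2 S (univFor_of_isomEmbeds_of_subset hiso hi hP)

theorem MinUnivFor.notShifted (hmin : MinUnivFor M X)
    (hdisj : ∀ i j, i ≠ j → Disjoint (P i) (P j)) (hiso : ∀ i, IsIsometricTo (P i) (M i))
    (i : ι) : NotShifted (M i) := by
  intro f hf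
  by_contra hsurj
  obtain ⟨m, hm⟩ := not_forall.1 hsurj
  obtain ⟨e⟩ := isIsometricTo_iff_nonempty_isometryEquiv.1 (hiso i)
  have hcopy : IsomEmbeds (M i) ↥({(e.symm m : X)}ᶜ : Set X) := by
    refine isomEmbeds_subtype_iff.2 ⟨(↑) ∘ e.symm ∘ f,
      isometry_subtype_coe.comp (e.symm.isometry.comp (isIsomEmb_iff_isometry.1 hf)), ?_⟩
    rintro _ ⟨a, rfl⟩ hfa
    exact hm ⟨a, e.symm.injective (Subtype.ext hfa)⟩
  have hP : ∀ k, k ≠ i → P k ⊆ {(e.symm m : X)}ᶜ := fun k hki =>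
    (hdisj k i hki).subset_compl_right.trans
      (compl_subset_compl.2 (singleton_subset_iff.2 (e.symm m).2))
  exact (hmin.eq_univ_of_isomEmbeds_of_subset hiso hcopy hP).symm.subset (mem_univ _) rfl

theorem MinUnivFor.not_isomEmbeds (hmin : MinUnivFor M X) (hne : ∀ i, (P i).Nonempty)
    (hdisj : ∀ i j, i ≠ j → Disjoint (P i) (P j)) (hiso : ∀ i, IsIsometricTo (P i) (M i))
    {i j : ι} (hij : i ≠ j) : ¬ IsomEmbeds (M i) (M j) := by
  rintro ⟨f, hf⟩
  obtain ⟨g, hg, hrange⟩ := (hiso j).exists_isometry_range_eq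
  have hcopy : IsomEmbeds (M i) ↥(P i)ᶜ :=
    isomEmbeds_subtype_iff.2 ⟨g ∘ f, hg.comp (isIsomEmb_iff_isometry.1 hf),
      (range_comp_subset_range f g).trans (hrange ▸ (hdisj j i hij.symm).subset_compl_right)⟩
  have hP : ∀ k, k ≠ i → P k ⊆ (P i)ᶜ := fun k hki => (hdisj k i hki).subset_compl_right
  obtain ⟨x, hx⟩ := hne i
  exact (hmin.eq_univ_of_isomEmbeds_of_subset hiso hcopy hP).symm.subset (mem_univ x) hx

theorem MinUnivFor.existsUnique_isIsometricTo (hmin : MinUnivFor M X)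
    (hdisj : ∀ i j, i ≠ j → Disjoint (P i) (P j)) (hiso : ∀ i, IsIsometricTo (P i) (M i))
    (i : ι) : ∃! S : Set X, IsIsometricTo S (M i) := by
  refine ⟨P i, hiso i, fun S hS => ?_⟩
  have hcopy : IsomEmbeds (M i) ↥(S ∪ (P i)ᶜ) := hS.isomEmbeds_of_subset subset_union_left
  have hP : ∀ k, k ≠ i → P k ⊆ S ∪ (P i)ᶜ := fun k hki =>
    (hdisj k i hki).subset_compl_right.trans subset_union_right
  have hcover := hmin.eq_univ_of_isomEmbeds_of_subset hiso hcopy hP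
  have hPS : P i ⊆ S := fun x hx =>
    (hcover.symm.subset (mem_univ x)).resolve_right (· hx)
  exact (eq_of_subset_of_isIsometricTo hPS (hiso i) hS (hmin.notShifted hdisj hiso i)).symm

theorem minUnivFor_of_existsUnique (hcov : ⋃ i, P i = univ)
    (hiso : ∀ i, IsIsometricTo (P i) (M i))
    (huniq : ∀ i, ∃! S : Set X, IsIsometricTo S (M i)) : MinUnivFor M X := by
  refine ⟨fun i => ?_, fun S hS => ?_⟩
  · obtain ⟨f, hf, -⟩ := (hiso i).exists_isometry_range_eq
    exact ⟨f, isIsomEmb_iff_isometry.2 hf⟩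
  · refine eq_univ_of_univ_subset (hcov ▸ iUnion_subset fun i => ?_)
    obtain ⟨f, hf, hfS⟩ := isomEmbeds_subtype_iff.1 (hS i)
    exact (huniq i).unique (hiso i) (isIsometricTo_range hf) ▸ hfS

end DisjointUnion

theorem statement13_general {ι : Type w} (M : ι → Type u) [∀ i, MetricSpace (M i)]
    {X : Type v} [MetricSpace X]
    (P : ι → Set X)
    (hne : ∀ i, (P i).Nonempty)
    (hdisj : ∀ i j, i ≠ j → Disjoint (P i) (P j))
    (hcov : (⋃ i, P i) = Set.univ)
    (hiso : ∀ i, IsIsometricTo ↥(P i) (M i)) :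
    MinUnivFor M X ↔
      ((∀ i, NotShifted (M i)) ∧
        (∀ i j, i ≠ j → ¬ IsomEmbeds (M i) (M j)) ∧
        (∀ i, ∃! S : Set X, IsIsometricTo ↥S (M i))) :=
  ⟨fun hmin => ⟨hmin.notShifted hdisj hiso,
      fun _ _ hij => hmin.not_isomEmbeds hne hdisj hiso hij,
      hmin.existsUnique_isIsometricTo hdisj hiso⟩,
    fun ⟨_, _, huniq⟩ => minUnivFor_of_existsUnique hcov hiso huniq⟩

/-- Let `M` be a nonempty family of nonempty metric spaces and let `X` be a disjoint union
of the members of `M`, i.e. `X` admits a partition `P` into nonempty sets with `P i`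
isometric to `M i` for every `i`. Then `X` is minimal `M`-universal iff: (i) every `M i`
is not shifted; (ii) distinct members of `M` are incomparable; (iii) for every `i` there
is a unique subset of `X` isometric to `M i`. -/
theorem statement13 {ι : Type w} [Nonempty ι] (M : ι → Type u) [∀ i, MetricSpace (M i)]
    [∀ i, Nonempty (M i)] {X : Type v} [MetricSpace X]
    (P : ι → Set X)
    (hne : ∀ i, (P i).Nonempty)
    (hdisj : ∀ i j, i ≠ j → Disjoint (P i) (P j))
    (hcov : (⋃ i, P i) = Set.univ)
    (hiso : ∀ i, IsIsometricTo ↥(P i) (M i)) :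
    MinUnivFor M X ↔
      ((∀ i, NotShifted (M i)) ∧
        (∀ i j, i ≠ j → ¬ IsomEmbeds (M i) (M j)) ∧
        (∀ i, ∃! S : Set X, IsIsometricTo ↥S (M i))) :=
  statement13_general M P hne hdisj hcov hiso
end
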